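/- arXiv:1703.01647 — 6 statements merged into one kernel-verified Lean document; each statement's English description precedes it below -/
import Mathlib

section
/- Let Z be a compact metric space, (h_n) a sequence of homeomorphisms of Z, and z_−, z_+ ∈ Z points such that h_n → z_+ uniformly on compact subsets of Z ∖ {z_−} (i.e. for every compact K ⊆ Z ∖ {z_−} and every ε > 0, d(h_n(y), z_+) < ε for all y ∈ K and all sufficiently large n). Then h_n^{-1} → z_− uniformly on compact subsets of Z ∖ {z_+}. -/
/-- `h n → p` uniformly on compact subsets of `E`. -/
def UnifConvOnCompacts {Z : Type*} [MetricSpace Z] (h : ℕ → Z → Z) (E : Set Z) (p : Z) : Prop :=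
  ∀ K : Set Z, IsCompact K → K ⊆ E → ∀ ε : ℝ, 0 < ε →
    ∃ N : ℕ, ∀ n ≥ N, ∀ y ∈ K, dist (h n y) p < ε

/-- Symmetry of contracting sequences: if `h n → z₊` uniformly on compacts of `Z ∖ {z₋}`, then
`h n⁻¹ → z₋` uniformly on compacts of `Z ∖ {z₊}`. -/
theorem contracting_symmetry {Z : Type*} [MetricSpace Z] [CompactSpace Z]
    (h : ℕ → Z ≃ₜ Z) (zm zp : Z)
    (hc : UnifConvOnCompacts (fun n y => h n y) ({zm}ᶜ) zp) :
    UnifConvOnCompacts (fun n y => (h n).symm y) ({zp}ᶜ) zm := by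
  intro K hK hKsub ε hε
  rcases K.eq_empty_or_nonempty with rfl | hne
  · exact ⟨0, fun n _ y hy => absurd hy (Set.notMem_empty y)⟩
  -- δ := infDist zp K > 0
  have hzp : zp ∉ K := fun hzp => hKsub hzp rfl
  have hδ : 0 < Metric.infDist zp K :=
    (hK.isClosed.notMem_iff_infDist_pos hne).mp hzp
  set δ := Metric.infDist zp K with hδdef
  -- K' := complement of ball around zm of radius ε, compact, ⊆ {zm}ᶜ
  have hK' : IsCompact ((Metric.ball zm ε)ᶜ) :=
    (Metric.isOpen_ball.isClosed_compl).isCompact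
  have hK'sub : (Metric.ball zm ε)ᶜ ⊆ ({zm}ᶜ : Set Z) := by
    intro y hy
    simp only [Set.mem_compl_iff, Metric.mem_ball, not_lt] at hy
    intro hmem
    rw [Set.mem_singleton_iff] at hmem
    subst hmem
    simp at hy
    exact absurd hy (not_le.mpr hε)
  obtain ⟨N, hN⟩ := hc _ hK' hK'sub δ hδ
  refine ⟨N, fun n hn y hy => ?_⟩
  by_contra hcon
  push_neg at hcon
  have hy' : (h n).symm y ∈ (Metric.ball zm ε)ᶜ := by
    simp only [Set.mem_compl_iff, Metric.mem_ball, not_lt]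
    exact hcon
  have h1 := hN n hn _ hy'
  simp only [Homeomorph.apply_symm_apply] at h1
  have h2 : δ ≤ dist zp y := Metric.infDist_le_dist_of_mem hy
  rw [dist_comm zp y] at h2
  linarith
end

section
/- Let Z be a compact metric space, Γ a countably infinite group acting on Z by homeomorphisms, and U ⊆ Z an open subset. Then the action of Γ on U is proper (for every compact K ⊆ U, K ∩ γK ≠ ∅ for at most finitely many γ ∈ Γ) if and only if no two points of U are dynamically related with respect to Γ. -/
/-- A sequence in `Γ` goes to infinity: every element occurs at most finitely often. -/
def TendstoInftyInGroup {Γ : Type*} (g : ℕ → Γ) : Prop :=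
  ∀ γ : Γ, {n : ℕ | g n = γ}.Finite

/-- `z` and `z'` are dynamically related with respect to the `Γ`-action. -/
def DynRel (Γ : Type*) [Group Γ] {Z : Type*} [TopologicalSpace Z] [MulAction Γ Z]
    (z z' : Z) : Prop :=
  ∃ g : ℕ → Γ, TendstoInftyInGroup g ∧
    ∃ zs : ℕ → Z, Filter.Tendsto zs Filter.atTop (nhds z) ∧
      Filter.Tendsto (fun n => g n • zs n) Filter.atTop (nhds z')

/-- The action on an open set `U` is proper iff no two points of `U` are dynamically related. -/
theorem proper_iff_no_dynRel {Γ Z : Type*} [Group Γ] [Countable Γ] [Infinite Γ]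
    [MetricSpace Z] [CompactSpace Z] [MulAction Γ Z]
    (hcont : ∀ γ : Γ, Continuous (fun z : Z => γ • z))
    (U : Set Z) (hU : IsOpen U) :
    (∀ K : Set Z, K ⊆ U → IsCompact K →
        {γ : Γ | (K ∩ (fun u => γ • u) '' K).Nonempty}.Finite) ↔
      ∀ z ∈ U, ∀ z' ∈ U, ¬ DynRel Γ z z' := by
  constructor
  · rintro hproper z hz z' hz' ⟨g, hg, zs, hzs, hgzs⟩
    obtain ⟨ε₁, hε₁, hb₁⟩ := Metric.isOpen_iff.1 hU z hz
    obtain ⟨ε₂, hε₂, hb₂⟩ := Metric.isOpen_iff.1 hU z' hz'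
    set K := Metric.closedBall z (ε₁ / 2) ∪ Metric.closedBall z' (ε₂ / 2) with hKdef
    have hKU : K ⊆ U := by
      rintro x (hx | hx)
      · exact hb₁ (Metric.mem_ball.2 (lt_of_le_of_lt (Metric.mem_closedBall.1 hx) (by linarith)))
      · exact hb₂ (Metric.mem_ball.2 (lt_of_le_of_lt (Metric.mem_closedBall.1 hx) (by linarith)))
    have hKc : IsCompact K :=
      (Metric.isClosed_closedBall.union Metric.isClosed_closedBall).isCompact
    have h1 : ∀ᶠ n in Filter.atTop, zs n ∈ Metric.closedBall z (ε₁ / 2) :=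
      hzs (Metric.closedBall_mem_nhds z (by linarith))
    have h2 : ∀ᶠ n in Filter.atTop, g n • zs n ∈ Metric.closedBall z' (ε₂ / 2) :=
      hgzs (Metric.closedBall_mem_nhds z' (by linarith))
    obtain ⟨N, hN⟩ := Filter.eventually_atTop.1 (h1.and h2)
    have hfin := hproper K hKU hKc
    have hsub : Set.Ici N ⊆ ⋃ γ ∈ {γ : Γ | (K ∩ (fun u => γ • u) '' K).Nonempty}, {n : ℕ | g n = γ} := by
      intro n hn
      have h := hN n hn
      have hmem : g n ∈ {γ : Γ | (K ∩ (fun u => γ • u) '' K).Nonempty} :=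
        ⟨g n • zs n, Or.inr h.2, ⟨zs n, Or.inl h.1, rfl⟩⟩
      exact Set.mem_biUnion hmem rfl
    exact (Set.Ici_infinite N) ((hfin.biUnion fun γ _ => hg γ).subset hsub)
  · intro hnd K hKU hKc
    by_contra hinf
    have hinf : {γ : Γ | (K ∩ (fun u => γ • u) '' K).Nonempty}.Infinite := hinf
    let e := hinf.natEmbedding
    have hx : ∀ n : ℕ, ∃ x ∈ K, ((e n : Γ) • x) ∈ K := by
      intro n
      obtain ⟨y, hyK, x, hxK, hxy⟩ := (e n).2
      exact ⟨x, hxK, by simpa [← hxy] using hyK⟩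
    choose x hxK hgxK using hx
    obtain ⟨z, hzK, φ, hφ, hzt⟩ := hKc.tendsto_subseq hxK
    obtain ⟨z', hz'K, ψ, hψ, hz't⟩ :=
      hKc.tendsto_subseq (x := fun n => (e (φ n) : Γ) • x (φ n)) (fun n => hgxK (φ n))
    refine hnd z (hKU hzK) z' (hKU hz'K)
      ⟨fun n => (e (φ (ψ n)) : Γ), ?_, fun n => x (φ (ψ n)), ?_, ?_⟩
    · intro γ
      have hinj : Function.Injective fun n => (e (φ (ψ n)) : Γ) := by
        intro m n hmn
        exact (hφ.comp hψ).injective (e.injective (Subtype.ext hmn))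
      apply Set.Subsingleton.finite
      intro m hm n hn
      exact hinj (hm.trans hn.symm)
    · exact hzt.comp (hψ.tendsto_atTop)
    · exact hz't
end

section
/- Let Z be a metric space, h : Z → Z a homeomorphism, z ∈ Z, r > 0 and c > 1 such that d(h(z_1), h(z_2)) ≥ c·d(z_1, z_2) for all z_1, z_2 ∈ B(z, r). Then there exists r_0 ∈ (0, r] such that for every r' ≤ r_0, the image h(B(z, r')) contains the ball B(h(z), c·r'). -/
/-- An expanding homeomorphism enlarges small balls by the expansion factor. -/
theorem expanding_enlarges_balls {Z : Type*} [MetricSpace Z] (h : Z ≃ₜ Z) (z : Z)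
    (r c : ℝ) (hr : 0 < r) (hc : 1 < c)
    (hexp : ∀ z₁ ∈ Metric.ball z r, ∀ z₂ ∈ Metric.ball z r,
      c * dist z₁ z₂ ≤ dist (h z₁) (h z₂)) :
    ∃ r₀ : ℝ, 0 < r₀ ∧ r₀ ≤ r ∧ ∀ r' : ℝ, 0 < r' → r' ≤ r₀ →
      Metric.ball (h z) (c * r') ⊆ (fun u => h u) '' Metric.ball z r' := by
  have hc0 : 0 < c := lt_trans one_pos hc
  have hcont : ContinuousAt h.symm (h z) := h.symm.continuous.continuousAt
  obtain ⟨δ, hδ, hδ'⟩ := Metric.continuousAt_iff.mp hcont r hr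
  refine ⟨min r (δ / c), lt_min hr (div_pos hδ hc0), min_le_left _ _, ?_⟩
  intro r' hr' hr'0 w hw
  have hwδ : dist w (h z) < δ := by
    have h1 : c * r' ≤ δ := by
      calc c * r' ≤ c * (δ / c) := by
            have := le_trans hr'0 (min_le_right r (δ / c))
            nlinarith
        _ = δ := by field_simp
    exact lt_of_lt_of_le (Metric.mem_ball.mp hw) h1
  have hu : dist (h.symm w) z < r := by
    have := hδ' hwδ
    rwa [h.symm_apply_apply] at this
  have hz : z ∈ Metric.ball z r := Metric.mem_ball_self hr
  have hkey := hexp (h.symm w) (Metric.mem_ball.mpr hu) z hz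
  rw [h.apply_symm_apply] at hkey
  have hltd : c * dist (h.symm w) z < c * r' :=
    lt_of_le_of_lt hkey (Metric.mem_ball.mp hw)
  have : dist (h.symm w) z < r' := lt_of_mul_lt_mul_left hltd hc0.le
  exact ⟨h.symm w, Metric.mem_ball.mpr this, h.apply_symm_apply w⟩
end

section
/- Let Z be a compact metric space and Γ a group acting on Z by homeomorphisms which is expanding at Z: for every point z ∈ Z there exist γ ∈ Γ, a neighborhood U of z and c > 1 such that γ|_U is c-expanding. Then there exist uniform constants r > 0 and c > 1 such that for every z ∈ Z there is γ ∈ Γ which is c-expanding on B(z, r) and satisfies γ(B(z, r')) ⊇ B(γz, c·r') for all r' ≤ r. -/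
/-- For an expanding action on a compact metric space, the expansion radius and factor
can be chosen uniformly, and expanding elements enlarge balls uniformly. -/
theorem uniform_expansion_of_expanding_action {Γ Z : Type*} [Group Γ]
    [MetricSpace Z] [CompactSpace Z] [MulAction Γ Z]
    (hcont : ∀ γ : Γ, Continuous (fun z : Z => γ • z))
    (hexp : ∀ z : Z, ∃ γ : Γ, ∃ U ∈ nhds z, ∃ c : ℝ, 1 < c ∧
      ∀ z₁ ∈ U, ∀ z₂ ∈ U, c * dist z₁ z₂ ≤ dist (γ • z₁) (γ • z₂)) :
    ∃ r : ℝ, 0 < r ∧ ∃ c : ℝ, 1 < c ∧ ∀ z : Z, ∃ γ : Γ,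
      (∀ z₁ ∈ Metric.ball z r, ∀ z₂ ∈ Metric.ball z r,
        c * dist z₁ z₂ ≤ dist (γ • z₁) (γ • z₂)) ∧
      ∀ r' : ℝ, 0 < r' → r' ≤ r →
        Metric.ball (γ • z) (c * r') ⊆ (fun u => γ • u) '' Metric.ball z r' := by
  classical
  rcases isEmpty_or_nonempty Z with hZ | hZ
  · exact ⟨1, one_pos, 2, one_lt_two, fun z => isEmptyElim z⟩
  choose γ U hU c hc1 hcexp using hexp
  have hρ : ∀ z : Z, ∃ ρ > 0, Metric.ball z (2 * ρ) ⊆ U z := by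
    intro z
    obtain ⟨ε, hε, hball⟩ := Metric.mem_nhds_iff.mp (hU z)
    refine ⟨ε / 2, by linarith, ?_⟩
    have : 2 * (ε / 2) = ε := by ring
    rw [this]; exact hball
  choose ρ hρpos hρball using hρ
  obtain ⟨t, ht⟩ := IsCompact.elim_finite_subcover isCompact_univ
      (fun z : Z => Metric.ball z (ρ z)) (fun z => Metric.isOpen_ball)
      (fun z _ => Set.mem_iUnion.mpr ⟨z, Metric.mem_ball_self (hρpos z)⟩)
  have htne : t.Nonempty := by
    obtain ⟨z⟩ := hZ
    obtain ⟨i, hi, _⟩ := Set.mem_iUnion₂.mp (ht (Set.mem_univ z))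
    exact ⟨i, hi⟩
  set r₀ : ℝ := t.inf' htne ρ with hr₀def
  set cm : ℝ := t.inf' htne c with hcmdef
  have hr₀pos : 0 < r₀ := by
    rw [hr₀def, Finset.lt_inf'_iff]; exact fun i _ => hρpos i
  have hcm1 : 1 < cm := by
    rw [hcmdef, Finset.lt_inf'_iff]; exact fun i _ => hc1 i
  have hcmpos : 0 < cm := lt_trans one_pos hcm1
  have hUC : ∀ z : Z, ∃ ε > 0, ∀ x y : Z,
      dist x y < ε → dist ((γ z)⁻¹ • x) ((γ z)⁻¹ • y) < r₀ := by
    intro z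
    have h : UniformContinuous (fun x : Z => (γ z)⁻¹ • x) :=
      CompactSpace.uniformContinuous_of_continuous (hcont (γ z)⁻¹)
    obtain ⟨δ, hδ, hd⟩ := Metric.uniformContinuous_iff.mp h r₀ hr₀pos
    exact ⟨δ, hδ, fun x y h' => hd h'⟩
  choose ε hεpos hε using hUC
  set εm : ℝ := t.inf' htne ε with hεmdef
  have hεmpos : 0 < εm := by
    rw [hεmdef, Finset.lt_inf'_iff]; exact fun i _ => hεpos i
  set r : ℝ := min r₀ (εm / cm) with hrdef
  have hrpos : 0 < r := lt_min hr₀pos (div_pos hεmpos hcmpos)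
  have hrr₀ : r ≤ r₀ := min_le_left _ _
  have hcmr : cm * r ≤ εm := by
    have : r ≤ εm / cm := min_le_right _ _
    calc cm * r ≤ cm * (εm / cm) := by nlinarith
      _ = εm := by field_simp
  refine ⟨r, hrpos, cm, hcm1, fun z => ?_⟩
  obtain ⟨i, hit, hzi⟩ := Set.mem_iUnion₂.mp (ht (Set.mem_univ z))
  have hr₀i : r₀ ≤ ρ i := Finset.inf'_le _ hit
  have hcmi : cm ≤ c i := Finset.inf'_le _ hit
  have hεmi : εm ≤ ε i := Finset.inf'_le _ hit
  have hsub : Metric.ball z r₀ ⊆ U i := by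
    intro y hy
    apply hρball i
    rw [Metric.mem_ball] at *
    calc dist y i ≤ dist y z + dist z i := dist_triangle _ _ _
      _ < r₀ + ρ i := add_lt_add hy hzi
      _ ≤ 2 * ρ i := by linarith
  have hzU : z ∈ U i := hsub (Metric.mem_ball_self hr₀pos)
  refine ⟨γ i, ?_, ?_⟩
  · intro z₁ h₁ z₂ h₂
    have h₁' : z₁ ∈ U i := hsub (Metric.ball_subset_ball hrr₀ h₁)
    have h₂' : z₂ ∈ U i := hsub (Metric.ball_subset_ball hrr₀ h₂)
    calc cm * dist z₁ z₂ ≤ c i * dist z₁ z₂ :=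
          mul_le_mul_of_nonneg_right hcmi dist_nonneg
      _ ≤ dist (γ i • z₁) (γ i • z₂) := hcexp i z₁ h₁' z₂ h₂'
  · intro r' hr'0 hr'r w hw
    rw [Metric.mem_ball, dist_comm] at hw
    refine ⟨(γ i)⁻¹ • w, ?_, smul_inv_smul _ _⟩
    rw [Metric.mem_ball, dist_comm]
    set u : Z := (γ i)⁻¹ • w with hudef
    have hgu : γ i • u = w := smul_inv_smul _ _
    by_contra hcon
    push_neg at hcon
    rcases lt_or_ge (dist z u) r₀ with hlt | hge
    · have hu : u ∈ U i := hsub (Metric.mem_ball'.mpr hlt)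
      have hex := hcexp i z hzU u hu
      rw [hgu] at hex
      have h1 : cm * r' ≤ cm * dist z u :=
        mul_le_mul_of_nonneg_left hcon (le_of_lt hcmpos)
      have h2 : cm * dist z u ≤ c i * dist z u :=
        mul_le_mul_of_nonneg_right hcmi dist_nonneg
      linarith
    · have hne : ¬ dist (γ i • z) w < ε i := by
        intro hlt'
        have := hε i (γ i • z) w hlt'
        rw [inv_smul_smul] at this
        exact absurd this (not_lt.mpr hge)
      have h1 : ε i ≤ dist (γ i • z) w := not_lt.mp hne
      have h2 : cm * r' ≤ cm * r :=
        mul_le_mul_of_nonneg_left hr'r (le_of_lt hcmpos)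
      linarith
end

section
/- Let Z be a perfect compact metric space and Γ a group acting on Z by homeomorphisms such that: (a) the action is a convergence action (every sequence of distinct elements of Γ has a subsequence (γ_n) for which there are points z_± ∈ Z with γ_n → z_+ uniformly on compact subsets of Z ∖ {z_−}), and (b) the action is expanding at every point of Z (each z ∈ Z has a neighborhood on which some γ ∈ Γ is c-expanding for some c > 1). Then every point z ∈ Z is a conical limit point: there exist a sequence γ_n → ∞ in Γ and a point z_− ∈ Z such that γ_n^{-1} → z_− uniformly on compact subsets of Z ∖ {z} while the sequence γ_n^{-1} z converges to a point different from z_−. -/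
open Filter Metric Set

/-- For an expanding convergence action on a perfect compact metric space, every point
is a conical limit point. -/
theorem expanding_convergence_action_conical {Γ Z : Type*} [Group Γ]
    [MetricSpace Z] [CompactSpace Z] [MulAction Γ Z]
    (hperfect : ∀ z : Z, Filter.NeBot (nhdsWithin z ({z}ᶜ)))
    (hthree : ∃ a b c : Z, a ≠ b ∧ a ≠ c ∧ b ≠ c)
    (hcont : ∀ γ : Γ, Continuous (fun z : Z => γ • z))
    (hconv : ∀ g : ℕ → Γ, Function.Injective g →
      ∃ φ : ℕ → ℕ, StrictMono φ ∧ ∃ zm zp : Z,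
        UnifConvOnCompacts (fun n y => g (φ n) • y) ({zm}ᶜ) zp)
    (hexp : ∀ z : Z, ∃ γ : Γ, ∃ U ∈ nhds z, ∃ c : ℝ, 1 < c ∧
      ∀ z₁ ∈ U, ∀ z₂ ∈ U, c * dist z₁ z₂ ≤ dist (γ • z₁) (γ • z₂)) :
    ∀ z : Z, ∃ g : ℕ → Γ, TendstoInftyInGroup g ∧ ∃ zm w : Z, w ≠ zm ∧
      UnifConvOnCompacts (fun n y => (g n)⁻¹ • y) ({z}ᶜ) zm ∧
      Filter.Tendsto (fun n => (g n)⁻¹ • z) Filter.atTop (nhds w) := by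
  intro z
  classical
  -- extract expansion data
  choose γp Up hUp cp hcp hexp' using hexp
  -- finite subcover of the interiors
  obtain ⟨t, ht⟩ := isCompact_univ.elim_finite_subcover
    (fun p : Z => interior (Up p)) (fun p => isOpen_interior)
    (fun x _ => Set.mem_iUnion.mpr ⟨x, mem_interior_iff_mem_nhds.mpr (hUp x)⟩)
  have htne : t.Nonempty := by
    obtain ⟨p, hp, -⟩ := Set.mem_iUnion₂.mp (ht (Set.mem_univ z))
    exact ⟨p, hp⟩
  -- Lebesgue number δ
  obtain ⟨δ, δpos, hδ⟩ := lebesgue_number_lemma_of_metric (s := (Set.univ : Set Z))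
    (c := fun i : t => interior (Up (i : Z))) isCompact_univ (fun i => isOpen_interior)
    (by
      intro x hx
      obtain ⟨p, hp, hx'⟩ := Set.mem_iUnion₂.mp (ht hx)
      exact Set.mem_iUnion.mpr ⟨⟨p, hp⟩, hx'⟩)
  choose Pz hPz using fun x : Z => hδ x (Set.mem_univ x)
  set ε : ℝ := δ / 2 with hεdef
  have εpos : 0 < ε := by positivity
  have εlt : ε < δ := half_lt_self δpos
  -- uniform continuity moduli for the inverse maps
  have hu : ∀ p : Z, ∃ θ' > 0, ∀ a b : Z, dist a b < θ' →
      dist ((γp p)⁻¹ • a) ((γp p)⁻¹ • b) < ε := by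
    intro p
    have huc : UniformContinuous (fun y : Z => (γp p)⁻¹ • y) :=
      CompactSpace.uniformContinuous_of_continuous (hcont _)
    rcases Metric.uniformContinuous_iff.mp huc ε εpos with ⟨θ', h1, h2⟩
    exact ⟨θ', h1, fun a b hab => h2 hab⟩
  choose θf θfpos hθf using hu
  set c₀ : ℝ := t.inf' htne cp with hc₀def
  have hc₀1 : 1 < c₀ := (Finset.lt_inf'_iff htne).mpr fun p _ => hcp p
  have hc₀le : ∀ p ∈ t, c₀ ≤ cp p := fun p hp => Finset.inf'_le _ hp
  set θ : ℝ := t.inf' htne θf with hθdef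
  have θpos : 0 < θ := (Finset.lt_inf'_iff htne).mpr fun p _ => θfpos p
  have θle : ∀ p ∈ t, θ ≤ θf p := fun p hp => Finset.inf'_le _ hp
  -- the trajectory of group elements
  let G : ℕ → Γ := fun n => Nat.rec 1 (fun _ g => γp ((Pz (g • z) : Z)) * g) n
  have hGs : ∀ n, G (n + 1) = γp ((Pz (G n • z) : Z)) * G n := fun n => rfl
  -- one-step expansion estimate
  have step : ∀ (y : Z) (n : ℕ),
      min θ (c₀ * dist (G n • y) (G n • z)) ≤ dist (G (n + 1) • y) (G (n + 1) • z) := by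
    intro y n
    set a := G n • y with ha'
    set b := G n • z with hb'
    have hpt : (Pz b : Z) ∈ t := (Pz b).2
    have hsmul : G (n + 1) • y = γp (Pz b : Z) • a := by rw [hGs n, mul_smul]
    have hsmul' : G (n + 1) • z = γp (Pz b : Z) • b := by rw [hGs n, mul_smul]
    rw [hsmul, hsmul']
    rcases le_or_gt (dist a b) ε with hle | hgt
    · have ha : a ∈ Up (Pz b : Z) := by
        have hmem : a ∈ Metric.ball b δ := by
          rw [Metric.mem_ball]; exact lt_of_le_of_lt hle εlt
        exact interior_subset (hPz b hmem)
      have hb : b ∈ Up (Pz b : Z) :=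
        interior_subset (hPz b (Metric.mem_ball_self δpos))
      have hexpand := hexp' (Pz b : Z) a ha b hb
      have h2 : c₀ * dist a b ≤ cp (Pz b : Z) * dist a b :=
        mul_le_mul_of_nonneg_right (hc₀le _ hpt) dist_nonneg
      exact le_trans (min_le_right _ _) (le_trans h2 hexpand)
    · by_contra hcon
      push_neg at hcon
      have h1 : dist (γp (Pz b : Z) • a) (γp (Pz b : Z) • b) < θ :=
        lt_of_lt_of_le hcon (min_le_left _ _)
      have h2 := hθf (Pz b : Z) _ _ (lt_of_lt_of_le h1 (θle _ hpt))
      simp only [inv_smul_smul] at h2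
      linarith
  -- iterated expansion estimate
  have iter : ∀ (y : Z) (m n : ℕ),
      min θ (c₀ ^ n * dist (G m • y) (G m • z)) ≤ dist (G (m + n) • y) (G (m + n) • z) := by
    intro y m n
    induction n with
    | zero => simpa using min_le_right θ _
    | succ n ih =>
      have hstep := step y (m + n)
      have hD : (0:ℝ) ≤ dist (G (m + n) • y) (G (m + n) • z) := dist_nonneg
      have hd0 : (0:ℝ) ≤ dist (G m • y) (G m • z) := dist_nonneg
      have key : min θ (c₀ ^ (n + 1) * dist (G m • y) (G m • z))
          ≤ min θ (c₀ * dist (G (m + n) • y) (G (m + n) • z)) := by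
        apply le_min (min_le_left _ _)
        rcases le_total θ (c₀ ^ n * dist (G m • y) (G m • z)) with h | h
        · have hθD : θ ≤ dist (G (m + n) • y) (G (m + n) • z) := by
            have := min_eq_left h ▸ ih
            linarith [min_eq_left h, ih, le_min h (le_refl θ)]
          calc min θ (c₀ ^ (n + 1) * dist (G m • y) (G m • z)) ≤ θ := min_le_left _ _
            _ ≤ dist (G (m + n) • y) (G (m + n) • z) := hθD
            _ ≤ c₀ * dist (G (m + n) • y) (G (m + n) • z) := le_mul_of_one_le_left hD hc₀1.le
        · have hmin : min θ (c₀ ^ n * dist (G m • y) (G m • z))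
              = c₀ ^ n * dist (G m • y) (G m • z) := min_eq_right h
          have hle2 : c₀ ^ n * dist (G m • y) (G m • z)
              ≤ dist (G (m + n) • y) (G (m + n) • z) := hmin ▸ ih
          calc min θ (c₀ ^ (n + 1) * dist (G m • y) (G m • z))
              ≤ c₀ ^ (n + 1) * dist (G m • y) (G m • z) := min_le_right _ _
            _ = c₀ * (c₀ ^ n * dist (G m • y) (G m • z)) := by ring
            _ ≤ c₀ * dist (G (m + n) • y) (G (m + n) • z) :=
                mul_le_mul_of_nonneg_left hle2 (by linarith)
      calc min θ (c₀ ^ (n + 1) * dist (G m • y) (G m • z))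
          ≤ min θ (c₀ * dist (G (m + n) • y) (G (m + n) • z)) := key
        _ ≤ dist (G (m + n + 1) • y) (G (m + n + 1) • z) := hstep
  -- eventually θ-separated
  have L4 : ∀ y : Z, y ≠ z → ∃ N, ∀ n ≥ N, θ ≤ dist (G n • y) (G n • z) := by
    intro y hy
    have d0pos : 0 < dist y z := dist_pos.mpr hy
    obtain ⟨N, hN⟩ := pow_unbounded_of_one_lt (θ / dist y z) hc₀1
    refine ⟨N, fun n hn => ?_⟩
    have h1 := iter y 0 n
    simp only [zero_add] at h1
    have hG0y : G 0 • y = y := one_smul _ _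
    have hG0z : G 0 • z = z := one_smul _ _
    rw [hG0y, hG0z] at h1
    have h2 : θ ≤ c₀ ^ n * dist y z := by
      have hpow : c₀ ^ N ≤ c₀ ^ n := pow_le_pow_right₀ hc₀1.le hn
      rw [div_lt_iff₀ d0pos] at hN
      nlinarith
    rwa [min_eq_left h2] at h1
  -- points approaching z
  have hq0 : ∀ k : ℕ, ∃ y : Z, dist y z < 1 / (k + 1) ∧ y ≠ z := by
    intro k
    have hrpos : (0:ℝ) < 1 / (k + 1) := by positivity
    have hball : Metric.ball z (1 / (k + 1)) ∈ nhdsWithin z ({z}ᶜ) :=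
      nhdsWithin_le_nhds (Metric.ball_mem_nhds z hrpos)
    obtain ⟨y, hy⟩ := (hperfect z).nonempty_of_mem (Filter.inter_mem hball self_mem_nhdsWithin)
    exact ⟨y, Metric.mem_ball.mp hy.1, hy.2⟩
  choose q hqdist hqne using hq0
  have hsmall : ∀ r : ℝ, 0 < r → ∃ M : ℕ, ∀ k ≥ M, dist (q k) z < r := by
    intro r hr
    obtain ⟨M, hM⟩ := exists_nat_one_div_lt hr
    refine ⟨M, fun k hk => lt_trans (lt_of_lt_of_le (hqdist k) ?_) hM⟩
    apply one_div_le_one_div_of_le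
    · positivity
    · have hk' : (M:ℝ) ≤ k := Nat.cast_le.mpr hk
      linarith
  -- eventual separation indices for the points q k
  have L4' : ∀ k : ℕ, ∃ N, ∀ n ≥ N, θ ≤ dist (G n • q k) (G n • z) := fun k => L4 (q k) (hqne k)
  choose Nq hNq using L4'
  -- strictly monotone time sequence
  let nseq : ℕ → ℕ := fun k => Nat.rec (Nq 0)
    (fun k' prev => max (max (Nq 0) (Nq (k' + 1))) prev + 1) k
  have hnseqs : ∀ k, nseq (k + 1) = max (max (Nq 0) (Nq (k + 1))) (nseq k) + 1 := fun k => rfl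
  have hnseq_ge1 : ∀ k, Nq k ≤ nseq k := by
    intro k
    cases k with
    | zero => exact le_refl _
    | succ k =>
      rw [hnseqs]
      exact le_trans (le_trans (le_max_right _ _) (le_max_left _ _)) (Nat.le_succ _)
  have hnseq_ge0 : ∀ k, Nq 0 ≤ nseq k := by
    intro k
    cases k with
    | zero => exact le_refl _
    | succ k =>
      rw [hnseqs]
      exact le_trans (le_trans (le_max_left _ _) (le_max_left _ _)) (Nat.le_succ _)
  have hbq : ∀ k, θ ≤ dist (G (nseq k) • q k) (G (nseq k) • z) := fun k => hNq k _ (hnseq_ge1 k)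
  have hb0 : ∀ k, θ ≤ dist (G (nseq k) • q 0) (G (nseq k) • z) := fun k => hNq 0 _ (hnseq_ge0 k)
  -- thresholds after which γ • q k is θ-close to γ • z
  have hMf0 : ∀ γ : Γ, ∃ M : ℕ, ∀ k ≥ M, dist (γ • q k) (γ • z) < θ := by
    intro γ
    obtain ⟨r, rpos, hr⟩ := Metric.continuousAt_iff.mp (hcont γ).continuousAt θ θpos
    obtain ⟨M, hM⟩ := hsmall r rpos
    exact ⟨M, fun k hk => hr (hM k hk)⟩
  choose Mf hMfs using hMf0
  -- the sequence of group elements leaves every finite set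
  have key : ∀ (F : Finset Γ) (K : ℕ), ∃ k, K ≤ k ∧ G (nseq k) ∉ F := by
    intro F K
    refine ⟨max K (F.sup Mf), le_max_left _ _, fun hmem => ?_⟩
    have h1 : Mf (G (nseq (max K (F.sup Mf)))) ≤ max K (F.sup Mf) :=
      le_trans (Finset.le_sup hmem) (le_max_right _ _)
    have h2 := hMfs _ _ h1
    have h3 := hbq (max K (F.sup Mf))
    linarith
  -- injective extraction
  let σ : ℕ → ℕ := fun i => Nat.rec 0
    (fun _ prev => (key ((Finset.range (prev + 1)).image (fun j => G (nseq j))) (prev + 1)).choose) i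
  have hσspec : ∀ i, σ i + 1 ≤ σ (i + 1) ∧
      G (nseq (σ (i + 1))) ∉ (Finset.range (σ i + 1)).image (fun j => G (nseq j)) := fun i =>
    (key ((Finset.range (σ i + 1)).image (fun j => G (nseq j))) (σ i + 1)).choose_spec
  have hσmono : StrictMono σ := strictMono_nat_of_lt_succ fun i =>
    lt_of_lt_of_le (Nat.lt_succ_self _) (hσspec i).1
  have hinj : Function.Injective (fun i => G (nseq (σ i))) := by
    have hne2 : ∀ i j, i < j → G (nseq (σ i)) ≠ G (nseq (σ j)) := by
      intro i j hij heq
      obtain ⟨j', rfl⟩ : ∃ j', j = j' + 1 :=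
        ⟨j - 1, (Nat.succ_pred_eq_of_pos (by omega)).symm⟩
      apply (hσspec j').2
      rw [← heq]
      exact Finset.mem_image.mpr ⟨σ i, Finset.mem_range.mpr
        (Nat.lt_succ_of_le (hσmono.monotone (Nat.lt_succ_iff.mp hij))), rfl⟩
    intro i j h
    rcases lt_trichotomy i j with hij | hij | hij
    · exact absurd h (hne2 i j hij)
    · exact hij
    · exact absurd h.symm (hne2 j i hij)
  obtain ⟨φ, hφ, zm1, zp1, hUC⟩ := hconv (fun i => G (nseq (σ i))) hinj
  -- the exceptional point of the convergence subsequence is z itself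
  have hzm : zm1 = z := by
    by_contra hzne
    have dpos : 0 < dist zm1 z := dist_pos.mpr hzne
    have hKc : IsCompact (Metric.closedBall z (dist zm1 z / 2)) :=
      Metric.isClosed_closedBall.isCompact
    have hKs : Metric.closedBall z (dist zm1 z / 2) ⊆ ({zm1}ᶜ : Set Z) := by
      intro y hy hyz
      rw [Set.mem_singleton_iff] at hyz
      subst hyz
      have := Metric.mem_closedBall.mp hy
      linarith
    obtain ⟨N, hN⟩ := hUC _ hKc hKs (θ / 2) (by positivity)
    obtain ⟨M, hM⟩ := hsmall (dist zm1 z / 2) (by positivity)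
    have hkn : max N M ≤ σ (φ (max N M)) := le_trans hφ.le_apply hσmono.le_apply
    have hq_in : q (σ (φ (max N M))) ∈ Metric.closedBall z (dist zm1 z / 2) :=
      Metric.mem_closedBall.mpr (le_of_lt (hM _ (le_trans (le_max_right N M) hkn)))
    have hz_in : z ∈ Metric.closedBall z (dist zm1 z / 2) :=
      Metric.mem_closedBall_self (by positivity)
    have h1 := hN (max N M) (le_max_left N M) _ hq_in
    have h2 := hN (max N M) (le_max_left N M) z hz_in
    have h3 := hbq (σ (φ (max N M)))
    have htri := dist_triangle (G (nseq (σ (φ (max N M)))) • q (σ (φ (max N M)))) zp1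
      (G (nseq (σ (φ (max N M)))) • z)
    have hcm : dist zp1 (G (nseq (σ (φ (max N M)))) • z)
        = dist (G (nseq (σ (φ (max N M)))) • z) zp1 := dist_comm _ _
    linarith
  rw [hzm] at hUC
  -- convergent subsequence of the orbit of z
  obtain ⟨w, -, ζ, hζ, hw⟩ := isCompact_univ.tendsto_subseq
    (x := fun i => G (nseq (σ (φ i))) • z) (fun i => Set.mem_univ _)
  -- the limit w differs from the attracting point zp1
  have hwne : w ≠ zp1 := by
    intro heq
    obtain ⟨N1, hN1⟩ := hUC {q 0} isCompact_singleton
      (Set.singleton_subset_iff.mpr (hqne 0)) (θ / 2) (by positivity)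
    obtain ⟨N2, hN2⟩ := (Metric.tendsto_atTop.mp hw) (θ / 2) (by positivity)
    have e1 := hN1 (ζ (max N1 N2)) (le_trans (le_max_left _ _) hζ.le_apply) (q 0)
      (Set.mem_singleton _)
    have e2 := hN2 (max N1 N2) (le_max_right _ _)
    simp only [Function.comp] at e2
    rw [heq] at e2
    have h3 := hb0 (σ (φ (ζ (max N1 N2))))
    have htri := dist_triangle (G (nseq (σ (φ (ζ (max N1 N2))))) • q 0) zp1
      (G (nseq (σ (φ (ζ (max N1 N2))))) • z)
    have hcm : dist zp1 (G (nseq (σ (φ (ζ (max N1 N2))))) • z)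
        = dist (G (nseq (σ (φ (ζ (max N1 N2))))) • z) zp1 := dist_comm _ _
    linarith
  refine ⟨fun i => (G (nseq (σ (φ (ζ i)))))⁻¹, ?_, zp1, w, hwne, ?_, ?_⟩
  · intro γ
    apply Set.Subsingleton.finite
    intro i hi j hj
    simp only [Set.mem_setOf_eq] at hi hj
    have h1 : G (nseq (σ (φ (ζ i)))) = G (nseq (σ (φ (ζ j)))) :=
      inv_injective (hi.trans hj.symm)
    exact hζ.injective (hφ.injective (hinj h1))
  · intro K hK hKs ε' hε'
    obtain ⟨N, hN⟩ := hUC K hK hKs ε' hε'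
    refine ⟨N, fun n hn y hy => ?_⟩
    have := hN (ζ n) (le_trans hn hζ.le_apply) y hy
    simpa [inv_inv] using this
  · have hfun : (fun i => ((G (nseq (σ (φ (ζ i)))))⁻¹)⁻¹ • z)
        = fun i => G (nseq (σ (φ (ζ i)))) • z := by
      funext i; rw [inv_inv]
    show Filter.Tendsto (fun i => ((G (nseq (σ (φ (ζ i)))))⁻¹)⁻¹ • z) Filter.atTop (nhds w)
    rw [hfun]
    exact hw
end

section
/- Let Z be a compact metric space and Γ a countably infinite group acting on Z by homeomorphisms. Let z, z' ∈ Z be points lying in different Γ-orbits. Then z and z' are dynamically related with respect to Γ if and only if their orbits Γz and Γz' cannot be separated by disjoint Γ-invariant open subsets of Z. -/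
/-- For points in different orbits, being dynamically related is equivalent to the orbits
not being separated by disjoint invariant open sets. -/
theorem dynRel_iff_not_separated {Γ Z : Type*} [Group Γ] [Countable Γ] [Infinite Γ]
    [MetricSpace Z] [CompactSpace Z] [MulAction Γ Z]
    (hcont : ∀ γ : Γ, Continuous (fun z : Z => γ • z))
    (z z' : Z) (horb : z' ∉ MulAction.orbit Γ z) :
    DynRel Γ z z' ↔
      ¬ ∃ V V' : Set Z, IsOpen V ∧ IsOpen V' ∧
        (∀ γ : Γ, ∀ v ∈ V, γ • v ∈ V) ∧ (∀ γ : Γ, ∀ v ∈ V', γ • v ∈ V') ∧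
        MulAction.orbit Γ z ⊆ V ∧ MulAction.orbit Γ z' ⊆ V' ∧ Disjoint V V' := by
  constructor
  · rintro ⟨g, hg, zs, hzs, hgzs⟩ ⟨V, V', oV, oV', invV, invV', hV, hV', hdisj⟩
    have hzV : z ∈ V := hV ⟨1, one_smul _ _⟩
    have hz'V' : z' ∈ V' := hV' ⟨1, one_smul _ _⟩
    have h1 : ∀ᶠ n in Filter.atTop, zs n ∈ V := hzs.eventually_mem (oV.mem_nhds hzV)
    have h2 : ∀ᶠ n in Filter.atTop, g n • zs n ∈ V' := hgzs.eventually_mem (oV'.mem_nhds hz'V')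
    obtain ⟨n, hn1, hn2⟩ := (h1.and h2).exists
    exact Set.disjoint_left.mp hdisj (invV (g n) _ hn1) hn2
  · intro hns
    by_contra hnd
    apply hns
    -- Step 1: some "transition set" is finite
    have hfin : ∃ n : ℕ,
        {γ : Γ | ∃ w : Z, dist w z < 1/(n+1) ∧ dist (γ • w) z' < 1/(n+1)}.Finite := by
      by_contra hinf
      push_neg at hinf
      apply hnd
      obtain ⟨e⟩ : Nonempty (ℕ ≃ Γ) := nonempty_equiv_of_countable
      have hchoice : ∀ n : ℕ, ∃ γ : Γ, (∃ w : Z, dist w z < 1/(n+1) ∧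
          dist (γ • w) z' < 1/(n+1)) ∧ n ≤ e.symm γ := by
        intro n
        have hfin' : {γ : Γ | (e.symm γ : ℕ) < n}.Finite :=
          (Set.finite_Iio n).preimage (e.symm.injective.injOn)
        obtain ⟨γ, hγ⟩ := (Set.Infinite.diff (hinf n) hfin').nonempty
        exact ⟨γ, hγ.1, not_lt.mp hγ.2⟩
      choose g hgF hge using hchoice
      choose zs h1 h2 using hgF
      have haux : Filter.Tendsto (fun n : ℕ => 1/((n:ℝ)+1)) Filter.atTop (nhds 0) :=
        tendsto_one_div_add_atTop_nhds_zero_nat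
      refine ⟨g, ?_, zs, ?_, ?_⟩
      · intro γ
        apply Set.Finite.subset (Set.finite_Iic (e.symm γ))
        intro n hn
        simp only [Set.mem_setOf_eq] at hn
        exact Set.mem_Iic.mpr (hn ▸ hge n)
      · rw [tendsto_iff_dist_tendsto_zero]
        exact squeeze_zero (fun n => dist_nonneg) (fun n => (h1 n).le) haux
      · rw [tendsto_iff_dist_tendsto_zero]
        exact squeeze_zero (fun n => dist_nonneg) (fun n => (h2 n).le) haux
    obtain ⟨n, hFn⟩ := hfin
    have hεpos : (0:ℝ) < 1/(n+1) := by positivity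
    -- Step 2: separate γ • z from z' for each γ
    have hne : ∀ γ : Γ, γ • z ≠ z' := fun γ h => horb ⟨γ, h⟩
    have hsep : ∀ γ : Γ, ∃ A B : Set Z, IsOpen A ∧ IsOpen B ∧ γ • z ∈ A ∧ z' ∈ B ∧
        Disjoint A B := fun γ => t2_separation (hne γ)
    choose A B hA hB hzA hz'B hAB using hsep
    set U0 : Set Z := Metric.ball z (1/(n+1)) ∩
      ⋂ γ ∈ hFn.toFinset, (fun w : Z => γ • w) ⁻¹' A γ with hU0
    set U1 : Set Z := Metric.ball z' (1/(n+1)) ∩ ⋂ γ ∈ hFn.toFinset, B γ with hU1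
    have oU0 : IsOpen U0 :=
      Metric.isOpen_ball.inter (isOpen_biInter_finset fun γ _ => (hA γ).preimage (hcont γ))
    have oU1 : IsOpen U1 :=
      Metric.isOpen_ball.inter (isOpen_biInter_finset fun γ _ => hB γ)
    have hzU0 : z ∈ U0 :=
      ⟨Metric.mem_ball_self hεpos, Set.mem_iInter₂.mpr fun γ _ => hzA γ⟩
    have hz'U1 : z' ∈ U1 :=
      ⟨Metric.mem_ball_self hεpos, Set.mem_iInter₂.mpr fun γ _ => hz'B γ⟩
    -- Step 3: no translate of U0 meets U1
    have key : ∀ γ : Γ, ∀ w ∈ U0, γ • w ∉ U1 := by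
      intro γ w hw hγw
      by_cases hγ : γ ∈ {γ : Γ | ∃ w : Z, dist w z < 1/(n+1) ∧ dist (γ • w) z' < 1/(n+1)}
      · have hm : γ ∈ hFn.toFinset := hFn.mem_toFinset.mpr hγ
        have hAγ : γ • w ∈ A γ := Set.mem_iInter₂.mp hw.2 γ hm
        have hBγ : γ • w ∈ B γ := Set.mem_iInter₂.mp hγw.2 γ hm
        exact Set.disjoint_left.mp (hAB γ) hAγ hBγ
      · exact hγ ⟨w, Metric.mem_ball.mp hw.1, Metric.mem_ball.mp hγw.1⟩
    -- Step 4: saturated open sets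
    refine ⟨⋃ γ : Γ, (fun x : Z => γ • x) ⁻¹' U0, ⋃ γ : Γ, (fun x : Z => γ • x) ⁻¹' U1,
      isOpen_iUnion fun γ => oU0.preimage (hcont γ),
      isOpen_iUnion fun γ => oU1.preimage (hcont γ), ?_, ?_, ?_, ?_, ?_⟩
    · intro δ v hv
      obtain ⟨γ, hγ⟩ := Set.mem_iUnion.mp hv
      exact Set.mem_iUnion.mpr ⟨γ * δ⁻¹, by simpa [Set.mem_preimage, smul_smul, mul_assoc]
        using hγ⟩
    · intro δ v hv
      obtain ⟨γ, hγ⟩ := Set.mem_iUnion.mp hv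
      exact Set.mem_iUnion.mpr ⟨γ * δ⁻¹, by simpa [Set.mem_preimage, smul_smul, mul_assoc]
        using hγ⟩
    · rintro x ⟨δ, rfl⟩
      exact Set.mem_iUnion.mpr ⟨δ⁻¹, by simpa [Set.mem_preimage, smul_smul] using hzU0⟩
    · rintro x ⟨δ, rfl⟩
      exact Set.mem_iUnion.mpr ⟨δ⁻¹, by simpa [Set.mem_preimage, smul_smul] using hz'U1⟩
    · rw [Set.disjoint_left]
      intro x hx hx'
      obtain ⟨γ, hγ⟩ := Set.mem_iUnion.mp hx
      obtain ⟨δ, hδ⟩ := Set.mem_iUnion.mp hx'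
      exact key (δ * γ⁻¹) (γ • x) hγ (by simpa [smul_smul, mul_assoc] using hδ)
end
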